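/- Dhar's formula: Let H = (U ∪ {s}, F) be a finite connected multigraph without loop-edges with sink s, and let ν_H be the uniform distribution on the set R_H of recurrent sandpiles. Then for all x, y ∈ U, the expectation under ν_H of n(x,y;η) equals g_H(x,y), where g_H = (Δ_H)^{−1} and Δ_H is the Dirichlet Laplacian of H, given by Δ_H(x,x) = deg_H(x) and Δ_H(x,y) = −a_{xy} for x ≠ y in U, with a_{xy} the number of edges joining x and y (Δ_H is invertible since H is connected). -/

import Mathlib

/-!
Toppling along a legal sequence changes a configuration by `-Δ_H` applied to its vector of
toppling counts. By the least action principle these counts, hence the stabilization, do not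
depend on the sequence, and stabilizing commutes with adding grains. Therefore
`η ↦ stab(η + 1_x)` maps the finite set `R_H` of recurrent configurations onto itself, so it
permutes `R_H`. Summing `η + 1_x - stab(η + 1_x) = Δ_H n(x,·;η)` over `R_H`, the configurations
cancel and `Δ_H (∑_η n(x,·;η)) = |R_H| 1_x`. As `R_H` contains the maximal stable configuration,
this exhibits a right inverse of `Δ_H`, and the symmetry of `Δ_H` gives the formula.
-/

/-- A finite connected multigraph without loop-edges, with a distinguished sink vertex.
`mult x y` is the number of edges joining `x` and `y`. -/
structure SandpileGraph (V : Type*) [Fintype V] [DecidableEq V] where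
  sink : V
  mult : V → V → ℕ
  symm : ∀ x y, mult x y = mult y x
  loopless : ∀ x, mult x x = 0
  conn : ∀ x : V, Relation.ReflTransGen (fun a b => 0 < mult a b) x sink

namespace SandpileGraph

variable {V : Type*} [Fintype V] [DecidableEq V]

/-- The degree of a vertex. -/
def deg (H : SandpileGraph V) (x : V) : ℕ := ∑ y, H.mult x y

/-- Toppling of the vertex `x`: `x` sends one grain along each incident edge;
grains reaching the sink are lost. -/
def topple (H : SandpileGraph V) (x : V) (η : V → ℕ) : V → ℕ :=
  fun y => if y = x then η y - H.deg x else if y = H.sink then η y else η y + H.mult x y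

/-- Legality of a finite sequence of topplings. -/
def LegalSeq (H : SandpileGraph V) : (V → ℕ) → List V → Prop
  | _, [] => True
  | η, x :: l => x ≠ H.sink ∧ H.deg x ≤ η x ∧ H.LegalSeq (H.topple x η) l

/-- The result of performing a sequence of topplings. -/
def toppleList (H : SandpileGraph V) : (V → ℕ) → List V → (V → ℕ)
  | η, [] => η
  | η, x :: l => H.toppleList (H.topple x η) l

/-- A configuration is stable if every non-sink vertex has fewer grains than its degree. -/
def Stable (H : SandpileGraph V) (η : V → ℕ) : Prop :=
  ∀ x, x ≠ H.sink → η x < H.deg x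

/-- Addition of one grain at `x`. -/
def addGrain (x : V) (η : V → ℕ) : V → ℕ := Function.update η x (η x + 1)

/-- Recurrent configurations of the sandpile Markov chain: stable configurations (vanishing
at the sink) reachable from any configuration by adding grains at non-sink vertices and
stabilizing. -/
def Recurrent (H : SandpileGraph V) (η : V → ℕ) : Prop :=
  η H.sink = 0 ∧ H.Stable η ∧
    ∀ ξ : V → ℕ, ξ H.sink = 0 →
      ∃ m : V → ℕ, m H.sink = 0 ∧
        ∃ l : List V, H.LegalSeq (ξ + m) l ∧ H.toppleList (ξ + m) l = η ∧
          H.Stable (H.toppleList (ξ + m) l)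

/-- The Dirichlet Laplacian matrix of `H` (indexed by non-sink vertices), over `ℚ`:
`Δ_H(x,x) = deg_H(x)` and `Δ_H(x,y) = -a_{xy}` for `x ≠ y`. -/
noncomputable def lap (H : SandpileGraph V) :
    Matrix {v : V // v ≠ H.sink} {v : V // v ≠ H.sink} ℚ :=
  Matrix.of fun a b => if (a : V) = (b : V) then (H.deg a : ℚ) else -(H.mult a b : ℚ)

/-- The Green function `g_H = (Δ_H)⁻¹`. -/
noncomputable def lapInv (H : SandpileGraph V) :
    Matrix {v : V // v ≠ H.sink} {v : V // v ≠ H.sink} ℚ :=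
  (H.lap)⁻¹

end SandpileGraph

namespace SandpileGraph

lemma addGrain_eq_add_single {V : Type*} [DecidableEq V] (x : V) (η : V → ℕ) :
    addGrain x η = η + Pi.single x 1 := by
  funext v
  rcases eq_or_ne v x with rfl | hvx <;> simp [addGrain, *]

variable {V : Type*} [Fintype V] [DecidableEq V] {H : SandpileGraph V}

lemma topple_self (x : V) (η : V → ℕ) : H.topple x η x = η x - H.deg x := by
  simp [topple]

lemma topple_of_ne {x v : V} (hvx : v ≠ x) (hv : v ≠ H.sink) (η : V → ℕ) :
    H.topple x η v = η v + H.mult x v := by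
  simp [topple, hvx, hv]

lemma topple_sink {x : V} (hx : x ≠ H.sink) (η : V → ℕ) : H.topple x η H.sink = η H.sink := by
  simp [topple, Ne.symm hx]

@[simp] lemma legalSeq_cons {η : V → ℕ} {x : V} {l : List V} :
    H.LegalSeq η (x :: l) ↔ x ≠ H.sink ∧ H.deg x ≤ η x ∧ H.LegalSeq (H.topple x η) l :=
  Iff.rfl

@[simp] lemma toppleList_nil (η : V → ℕ) : H.toppleList η [] = η := rfl

@[simp] lemma toppleList_cons (η : V → ℕ) (x : V) (l : List V) :
    H.toppleList η (x :: l) = H.toppleList (H.topple x η) l := rfl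

lemma toppleList_append (η : V → ℕ) (l l' : List V) :
    H.toppleList η (l ++ l') = H.toppleList (H.toppleList η l) l' := by
  induction l generalizing η with
  | nil => rfl
  | cons x l ih => exact ih _

lemma legalSeq_append {η : V → ℕ} {l l' : List V} :
    H.LegalSeq η (l ++ l') ↔ H.LegalSeq η l ∧ H.LegalSeq (H.toppleList η l) l' := by
  induction l generalizing η with
  | nil => simp [LegalSeq, toppleList]
  | cons x l ih => simp [ih, and_assoc]

lemma legalSeq_concat {η : V → ℕ} {l : List V} {x : V} :
    H.LegalSeq η (l ++ [x]) ↔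
      H.LegalSeq η l ∧ x ≠ H.sink ∧ H.deg x ≤ H.toppleList η l x := by
  simp [legalSeq_append, LegalSeq]

lemma topple_add_of_le {x : V} {η : V → ℕ} (m : V → ℕ) (hx : H.deg x ≤ η x) :
    H.topple x (η + m) = H.topple x η + m := by
  funext v
  rcases eq_or_ne v x with rfl | hvx
  · simp only [topple, Pi.add_apply, if_true]
    omega
  · simp only [topple, Pi.add_apply, hvx, if_false]
    split_ifs <;> omega

namespace LegalSeq

variable {η : V → ℕ} {l : List V}

lemma sink_notMem (h : H.LegalSeq η l) : H.sink ∉ l := by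
  induction l generalizing η with
  | nil => simp
  | cons x l ih =>
    obtain ⟨hx, -, hl⟩ := h
    simpa [Ne.symm hx] using ih hl

lemma toppleList_sink (h : H.LegalSeq η l) : H.toppleList η l H.sink = η H.sink := by
  induction l generalizing η with
  | nil => rfl
  | cons x l ih =>
    obtain ⟨hx, -, hl⟩ := h
    rw [toppleList_cons, ih hl, topple_sink hx]

lemma add (h : H.LegalSeq η l) (m : V → ℕ) :
    H.LegalSeq (η + m) l ∧ H.toppleList (η + m) l = H.toppleList η l + m := by
  induction l generalizing η with
  | nil => exact ⟨trivial, rfl⟩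
  | cons x l ih =>
    obtain ⟨hx, hdeg, hl⟩ := h
    rw [legalSeq_cons, toppleList_cons, toppleList_cons, topple_add_of_le m hdeg]
    exact ⟨⟨hx, le_add_right hdeg, (ih hl).1⟩, (ih hl).2⟩

end LegalSeq

lemma sum_count_cons_mul (x : V) (l : List V) (f : V → ℕ) :
    ∑ v, (x :: l).count v * f v = f x + ∑ v, l.count v * f v := by
  simp [List.count_cons, add_mul, Finset.sum_add_distrib, add_comm]

lemma sum_topple_add_mult_sink {x : V} (hx : x ≠ H.sink) {η : V → ℕ} (hdeg : H.deg x ≤ η x) :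
    ∑ v, H.topple x η v + H.mult x H.sink = ∑ v, η v := by
  have hpoint : ∀ v, H.topple x η v + (if v = x then H.deg x else 0) +
      (if v = H.sink then H.mult x v else 0) = η v + H.mult x v := by
    intro v
    rcases eq_or_ne v x with rfl | hvx
    · simp only [topple_self, ↓reduceIte, hx, add_zero, H.loopless]
      omega
    rcases eq_or_ne v H.sink with rfl | hvs
    · simp [topple_sink hx, hvx]
    · simp [topple_of_ne hvx hvs, hvx, hvs]
  have hsum := Finset.sum_congr rfl fun v (_ : v ∈ Finset.univ) => hpoint v
  simp only [Finset.sum_add_distrib, Finset.sum_ite_eq', Finset.mem_univ, if_true] at hsum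
  have hdeg_sum : ∑ v, H.mult x v = H.deg x := rfl
  omega

namespace LegalSeq

variable {η : V → ℕ} {l : List V}

lemma toppleList_add_count_mul_deg (h : H.LegalSeq η l) {v : V} (hv : v ≠ H.sink) :
    H.toppleList η l v + l.count v * H.deg v = η v + ∑ w, l.count w * H.mult w v := by
  induction l generalizing η with
  | nil => simp
  | cons x l ih =>
    obtain ⟨hx, hdeg, hl⟩ := h
    rw [toppleList_cons, sum_count_cons_mul, List.count_cons]
    have := ih hl
    rcases eq_or_ne v x with rfl | hvx
    · rw [topple_self] at this
      simp only [beq_self_eq_true, if_true, H.loopless]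
      rw [add_mul, one_mul]
      omega
    · rw [topple_of_ne hvx hv] at this
      simp only [beq_iff_eq, Ne.symm hvx, if_false, add_zero]
      omega

lemma sum_toppleList_add (h : H.LegalSeq η l) :
    ∑ v, H.toppleList η l v + ∑ w, l.count w * H.mult w H.sink = ∑ v, η v := by
  induction l generalizing η with
  | nil => simp
  | cons x l ih =>
    obtain ⟨hx, hdeg, hl⟩ := h
    rw [toppleList_cons, sum_count_cons_mul, ← sum_topple_add_mult_sink hx hdeg, ← ih hl]
    ring

lemma sum_count_mul_mult_le (h : H.LegalSeq η l) (c : V) :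
    ∑ w, l.count w * H.mult w c ≤ ∑ v, η v + l.count c * H.deg c := by
  have hmass := h.sum_toppleList_add
  rcases eq_or_ne c H.sink with rfl | hc
  · omega
  · have hc' : H.toppleList η l c ≤ ∑ v, H.toppleList η l v :=
      Finset.single_le_sum (fun _ _ => Nat.zero_le _) (Finset.mem_univ c)
    have := h.toppleList_add_count_mul_deg hc
    omega

end LegalSeq

/-- Induction along a path to the sink: a vertex topples at most as often as its next vertex on the
path receives grains. -/
lemma exists_forall_count_le (η : V → ℕ) (v : V) :
    ∃ K, ∀ l, H.LegalSeq η l → l.count v ≤ K := by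
  induction H.conn v using Relation.ReflTransGen.head_induction_on with
  | refl => exact ⟨0, fun l hl => (List.count_eq_zero.mpr hl.sink_notMem).le⟩
  | @head a c hac _ ih =>
    obtain ⟨K, hK⟩ := ih
    refine ⟨∑ w, η w + K * H.deg c, fun l hl => ?_⟩
    calc l.count a ≤ l.count a * H.mult a c := Nat.le_mul_of_pos_right _ hac
      _ ≤ ∑ w, l.count w * H.mult w c :=
        Finset.single_le_sum (f := fun w => l.count w * H.mult w c)
          (fun _ _ => Nat.zero_le _) (Finset.mem_univ a)
      _ ≤ ∑ w, η w + l.count c * H.deg c := hl.sum_count_mul_mult_le c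
      _ ≤ ∑ w, η w + K * H.deg c := by gcongr; exact hK l hl

lemma exists_forall_length_le (η : V → ℕ) : ∃ B, ∀ l, H.LegalSeq η l → l.length ≤ B := by
  choose K hK using fun v => H.exists_forall_count_le η v
  refine ⟨∑ v, K v, fun l hl => ?_⟩
  rw [← List.sum_toFinset_count_eq_length]
  calc ∑ v ∈ l.toFinset, l.count v ≤ ∑ v, l.count v :=
        Finset.sum_le_sum_of_subset (Finset.subset_univ _)
    _ ≤ ∑ v, K v := Finset.sum_le_sum fun v _ => hK v l hl

lemma exists_legalSeq_stable (η : V → ℕ) :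
    ∃ l, H.LegalSeq η l ∧ H.Stable (H.toppleList η l) := by
  by_contra! hunstable
  obtain ⟨B, hB⟩ := H.exists_forall_length_le η
  have hlong : ∀ n, ∃ l, H.LegalSeq η l ∧ l.length = n := by
    intro n
    induction n with
    | zero => exact ⟨[], trivial, rfl⟩
    | succ n ih =>
      obtain ⟨l, hl, rfl⟩ := ih
      obtain ⟨x, hx, hdeg⟩ : ∃ x, x ≠ H.sink ∧ H.deg x ≤ H.toppleList η l x := by
        simpa [Stable] using hunstable l hl
      exact ⟨l ++ [x], legalSeq_concat.mpr ⟨hl, hx, hdeg⟩, by simp⟩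
  obtain ⟨l, hl, hlen⟩ := hlong (B + 1)
  have := hB l hl
  omega

namespace LegalSeq

variable {η : V → ℕ} {l l' : List V}

/-- The least action principle. If `l` first overtakes `l'` at `x`, then `x` has received at most
as many grains along `l` as along `l'`, so it is still unstable after `l'`. -/
lemma count_le_of_stable (hl : H.LegalSeq η l) (hl' : H.LegalSeq η l')
    (hs' : H.Stable (H.toppleList η l')) (v : V) : l.count v ≤ l'.count v := by
  induction l using List.reverseRecOn generalizing v with
  | nil => simp
  | append_singleton l x ih =>
    obtain ⟨hl, hx, hdeg⟩ := legalSeq_concat.mp hl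
    have ih := ih hl
    rw [List.count_append, List.count_singleton]
    rcases eq_or_ne x v with rfl | hxv
    · by_contra hge
      simp only [BEq.rfl, ↓reduceIte] at hge
      have hcount : l.count x = l'.count x := by have := ih x; omega
      have hinflow : ∑ w, l.count w * H.mult w x ≤ ∑ w, l'.count w * H.mult w x :=
        Finset.sum_le_sum fun w _ => Nat.mul_le_mul_right _ (ih w)
      have h₁ := hl.toppleList_add_count_mul_deg hx
      have h₂ := hl'.toppleList_add_count_mul_deg hx
      have h₃ := hs' x hx
      rw [hcount] at h₁
      omega
    · simpa [hxv] using ih v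

lemma toppleList_eq_of_stable (hl : H.LegalSeq η l) (hs : H.Stable (H.toppleList η l))
    (hl' : H.LegalSeq η l') (hs' : H.Stable (H.toppleList η l')) :
    H.toppleList η l = H.toppleList η l' := by
  have hcount : ∀ w, l.count w = l'.count w := fun w =>
    le_antisymm (hl.count_le_of_stable hl' hs' w) (hl'.count_le_of_stable hl hs w)
  funext v
  rcases eq_or_ne v H.sink with rfl | hv
  · rw [hl.toppleList_sink, hl'.toppleList_sink]
  · have h₁ := hl.toppleList_add_count_mul_deg hv
    have h₂ := hl'.toppleList_add_count_mul_deg hv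
    simp only [hcount] at h₁
    omega

end LegalSeq

noncomputable def stabSeq (H : SandpileGraph V) (η : V → ℕ) : List V :=
  (H.exists_legalSeq_stable η).choose

noncomputable def stabilize (H : SandpileGraph V) (η : V → ℕ) : V → ℕ :=
  H.toppleList η (H.stabSeq η)

/-- `H.odometer (addGrain x η) y` is `n(x,y;η)`. -/
noncomputable def odometer (H : SandpileGraph V) (η : V → ℕ) (v : V) : ℕ :=
  (H.stabSeq η).count v

variable {η : V → ℕ}

lemma legalSeq_stabSeq : H.LegalSeq η (H.stabSeq η) :=
  (H.exists_legalSeq_stable η).choose_spec.1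

lemma stable_stabilize : H.Stable (H.stabilize η) :=
  (H.exists_legalSeq_stable η).choose_spec.2

lemma stabilize_eq_toppleList {l : List V} (hl : H.LegalSeq η l)
    (hs : H.Stable (H.toppleList η l)) : H.stabilize η = H.toppleList η l :=
  legalSeq_stabSeq.toppleList_eq_of_stable stable_stabilize hl hs

lemma stabilize_eq_self (h : H.Stable η) : H.stabilize η = η :=
  stabilize_eq_toppleList (l := []) trivial h

lemma stabilize_sink : H.stabilize η H.sink = η H.sink :=
  legalSeq_stabSeq.toppleList_sink

lemma stabilize_stabilize_add (η m : V → ℕ) :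
    H.stabilize (H.stabilize η + m) = H.stabilize (η + m) := by
  obtain ⟨hleg, htop⟩ := (legalSeq_stabSeq (H := H) (η := η)).add m
  have hleg' : H.LegalSeq (η + m) (H.stabSeq η ++ H.stabSeq (H.stabilize η + m)) :=
    legalSeq_append.mpr ⟨hleg, htop ▸ legalSeq_stabSeq⟩
  rw [stabilize_eq_toppleList hleg', toppleList_append, htop]
  · rfl
  · rw [toppleList_append, htop]
    exact stable_stabilize

lemma exists_toppleList_eq_iff {ζ : V → ℕ} :
    (∃ l, H.LegalSeq ζ l ∧ H.toppleList ζ l = η ∧ H.Stable (H.toppleList ζ l)) ↔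
      H.stabilize ζ = η := by
  constructor
  · rintro ⟨l, hl, rfl, hs⟩
    exact stabilize_eq_toppleList hl hs
  · rintro rfl
    exact ⟨H.stabSeq ζ, legalSeq_stabSeq, rfl, stable_stabilize⟩

lemma recurrent_iff :
    H.Recurrent η ↔ η H.sink = 0 ∧ H.Stable η ∧
      ∀ ξ : V → ℕ, ξ H.sink = 0 → ∃ m : V → ℕ, m H.sink = 0 ∧ H.stabilize (ξ + m) = η := by
  simp only [Recurrent, exists_toppleList_eq_iff]

lemma Recurrent.stabilize_add (hη : H.Recurrent η) {m : V → ℕ} (hm : m H.sink = 0) :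
    H.Recurrent (H.stabilize (η + m)) := by
  obtain ⟨hsink, -, hreach⟩ := recurrent_iff.mp hη
  refine recurrent_iff.mpr ⟨by simp [stabilize_sink, hsink, hm], stable_stabilize, fun ξ hξ => ?_⟩
  obtain ⟨m', hm', rfl⟩ := hreach ξ hξ
  exact ⟨m' + m, by simp [hm', hm], by rw [← add_assoc, ← stabilize_stabilize_add (ξ + m')]⟩

lemma Recurrent.stabilize_addGrain (hη : H.Recurrent η) {x : V} (hx : x ≠ H.sink) :
    H.Recurrent (H.stabilize (addGrain x η)) := by
  rw [addGrain_eq_add_single]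
  exact hη.stabilize_add (by simp [Ne.symm hx])

lemma Recurrent.exists_stabilize_addGrain_eq (hη : H.Recurrent η) {x : V} (hx : x ≠ H.sink) :
    ∃ ζ, H.Recurrent ζ ∧ H.stabilize (addGrain x ζ) = η := by
  obtain ⟨hsink, -, hreach⟩ := recurrent_iff.mp hη
  obtain ⟨m, hm, hstab⟩ :=
    hreach (addGrain x η) (by simp [addGrain_eq_add_single, hsink, Ne.symm hx])
  refine ⟨H.stabilize (η + m), hη.stabilize_add hm, ?_⟩
  rw [addGrain_eq_add_single, stabilize_stabilize_add, add_right_comm, ← addGrain_eq_add_single,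
    hstab]

lemma setOf_recurrent_finite : {η : V → ℕ | H.Recurrent η}.Finite := by
  refine (Set.finite_Icc 0 H.deg).subset fun η hη => ⟨zero_le, fun v => ?_⟩
  obtain ⟨hsink, hstable, -⟩ := hη
  rcases eq_or_ne v H.sink with rfl | hv
  · simp [hsink]
  · exact (hstable v hv).le

noncomputable def recurrents (H : SandpileGraph V) : Finset (V → ℕ) :=
  H.setOf_recurrent_finite.toFinset

@[simp] lemma mem_recurrents : η ∈ H.recurrents ↔ H.Recurrent η :=
  Set.Finite.mem_toFinset _

lemma deg_pos {v : V} (hv : v ≠ H.sink) : 0 < H.deg v := by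
  obtain rfl | ⟨c, hvc, -⟩ := (H.conn v).cases_head
  · exact absurd rfl hv
  · exact hvc.trans_le (Finset.single_le_sum (fun _ _ => Nat.zero_le _) (Finset.mem_univ c))

/-- Every stable configuration can be topped up to this one. -/
lemma recurrent_maxStable : H.Recurrent fun v => if v = H.sink then 0 else H.deg v - 1 := by
  set ηmax : V → ℕ := fun v => if v = H.sink then 0 else H.deg v - 1
  have hstable : H.Stable ηmax := fun v hv => by
    simp only [ηmax, hv, if_false]
    have := deg_pos hv
    omega
  refine recurrent_iff.mpr
    ⟨by simp [ηmax], hstable, fun ξ hξ => ⟨ηmax - H.stabilize ξ, by simp [ηmax], ?_⟩⟩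
  have hfill : H.stabilize ξ + (ηmax - H.stabilize ξ) = ηmax := by
    funext v
    rcases eq_or_ne v H.sink with rfl | hv
    · simp [ηmax, stabilize_sink, hξ]
    · have := stable_stabilize (H := H) (η := ξ) v hv
      simp only [Pi.add_apply, Pi.sub_apply, ηmax, hv, if_false]
      omega
  rw [← stabilize_stabilize_add, hfill, stabilize_eq_self hstable]

lemma recurrents_nonempty : H.recurrents.Nonempty :=
  ⟨_, mem_recurrents.mpr recurrent_maxStable⟩

/-- A surjection of the finite set of recurrent configurations onto itself is a permutation. -/
lemma sum_recurrents_stabilize_addGrain {M : Type*} [AddCommMonoid M] {x : V} (hx : x ≠ H.sink)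
    (f : (V → ℕ) → M) :
    ∑ η ∈ H.recurrents, f (H.stabilize (addGrain x η)) = ∑ η ∈ H.recurrents, f η := by
  have hmaps : Set.MapsTo (fun η => H.stabilize (addGrain x η)) H.recurrents H.recurrents :=
    fun η hη => by simpa using (mem_recurrents.mp hη).stabilize_addGrain hx
  have hsurj : Set.SurjOn (fun η => H.stabilize (addGrain x η)) H.recurrents H.recurrents :=
    fun η hη => by simpa using (mem_recurrents.mp hη).exists_stabilize_addGrain_eq hx
  have hbij := ((Finset.finite_toSet _).surjOn_iff_bijOn_of_mapsTo hmaps).mp hsurj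
  exact Finset.sum_nbij _ hmaps hbij.injOn hsurj fun _ _ => rfl

open Finset Matrix

lemma sum_subtype_ne {M : Type*} [AddCommMonoid M] (s : V) (f : V → M) (h : f s = 0) :
    ∑ v : {v // v ≠ s}, f v = ∑ v, f v := by
  rw [← Finset.sum_subtype (univ.erase s) (by simp) f, Finset.sum_erase _ h]

lemma lap_eq : H.lap = diagonal (fun a : {v // v ≠ H.sink} => (H.deg a : ℚ)) -
    of fun a b : {v // v ≠ H.sink} => (H.mult a b : ℚ) := by
  ext a b
  rcases eq_or_ne a b with rfl | hab
  · simp [lap, H.loopless]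
  · simp [lap, hab, Subtype.coe_ne_coe.mpr hab]

lemma lap_isSymm : H.lap.IsSymm :=
  IsSymm.ext fun a b => by
    simp only [lap, of_apply]
    split_ifs with hba hab hab <;> simp_all [H.symm]

lemma LegalSeq.lap_mulVec_count {η : V → ℕ} {l : List V} (h : H.LegalSeq η l) :
    H.lap *ᵥ (fun a => (l.count (a : V) : ℚ)) =
      fun a : {v // v ≠ H.sink} => (η a : ℚ) - H.toppleList η l a := by
  funext a
  have hid : (H.toppleList η l a : ℚ) + l.count (a : V) * H.deg a =
      η a + ∑ w, (l.count w : ℚ) * H.mult w a := by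
    exact_mod_cast h.toppleList_add_count_mul_deg a.2
  have hinflow : ∑ w, (l.count w : ℚ) * H.mult w a = ∑ b : {v // v ≠ H.sink},
      (H.mult a b : ℚ) * l.count (b : V) := by
    rw [sum_subtype_ne H.sink (fun w => (H.mult a w : ℚ) * l.count w)
      (by simp [List.count_eq_zero.mpr h.sink_notMem])]
    exact sum_congr rfl fun w _ => by rw [H.symm, mul_comm]
  rw [lap_eq, sub_mulVec, Pi.sub_apply, mulVec_diagonal]
  simp only [mulVec, dotProduct, of_apply]
  linarith

lemma lap_mulVec_sum_odometer {x : V} (hx : x ≠ H.sink) :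
    H.lap *ᵥ (fun a => ∑ η ∈ H.recurrents, (H.odometer (addGrain x η) a : ℚ)) =
      (#H.recurrents : ℚ) • Pi.single ⟨x, hx⟩ 1 := by
  funext a
  have hterm : ∀ η, (H.lap *ᵥ fun a => (H.odometer (addGrain x η) a : ℚ)) a =
      η a + (Pi.single x 1 : V → ℕ) a - H.stabilize (addGrain x η) a := fun η => by
    simp only [odometer]
    rw [legalSeq_stabSeq.lap_mulVec_count, addGrain_eq_add_single]
    simp only [Pi.add_apply, Nat.cast_add]
    rfl
  calc (H.lap *ᵥ fun a => ∑ η ∈ H.recurrents, (H.odometer (addGrain x η) a : ℚ)) a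
      = ∑ η ∈ H.recurrents, (H.lap *ᵥ fun a => (H.odometer (addGrain x η) a : ℚ)) a := by
        simp only [mulVec, dotProduct, mul_sum]
        exact sum_comm
    _ = #H.recurrents * ((Pi.single x 1 : V → ℕ) a : ℚ) := by
        simp only [hterm, sum_sub_distrib, sum_add_distrib,
          sum_recurrents_stabilize_addGrain hx fun η => (η a : ℚ), sum_const, nsmul_eq_mul]
        ring
    _ = ((#H.recurrents : ℚ) • Pi.single ⟨x, hx⟩ 1) a := by
        simp [Pi.single_apply, Subtype.ext_iff]

/-- Since `H.recurrents` is nonempty, the summed odometers, divided by their number, form a right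
inverse of `Δ_H`. -/
lemma lapInv_mul_card (a b : {v // v ≠ H.sink}) :
    H.lapInv a b * #H.recurrents = ∑ η ∈ H.recurrents, (H.odometer (addGrain b η) a : ℚ) := by
  have hcard : (#H.recurrents : ℚ) ≠ 0 := by exact_mod_cast recurrents_nonempty.card_pos.ne'
  have hinv : H.lap * of (fun a b : {v // v ≠ H.sink} =>
      (∑ η ∈ H.recurrents, (H.odometer (addGrain b η) a : ℚ)) / #H.recurrents) = 1 := by
    ext a b
    have h := congrFun (lap_mulVec_sum_odometer b.2) a
    simp only [mulVec, dotProduct] at h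
    simp only [mul_apply, of_apply, mul_div_assoc', ← sum_div, h]
    by_cases hab : a = b <;> simp [one_apply, hab, hcard]
  rw [lapInv, inv_eq_right_inv hinv, of_apply, div_mul_cancel₀ _ hcard]

end SandpileGraph

open SandpileGraph in
/-- **Dhar's formula.**  If `nfun η` is the number of times `y` topples during the
stabilization of `η + 1_x` (characterized by the hypothesis `hn` via any legal stabilizing
toppling sequence), then the average of `nfun` over the set of recurrent configurations
equals `g_H(x,y)`; equivalently, the sum over recurrent configurations equals
`g_H(x,y) · |R_H|`. -/
theorem dhar_formula {V : Type*} [Fintype V] [DecidableEq V] (H : SandpileGraph V)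
    (x y : V) (hx : x ≠ H.sink) (hy : y ≠ H.sink)
    (nfun : (V → ℕ) → ℕ)
    (hn : ∀ η : V → ℕ, H.Recurrent η →
      ∀ l : List V, H.LegalSeq (addGrain x η) l →
        H.Stable (H.toppleList (addGrain x η) l) → nfun η = l.count y) :
    ∑ᶠ η ∈ {η : V → ℕ | H.Recurrent η}, (nfun η : ℚ) =
      H.lapInv ⟨x, hx⟩ ⟨y, hy⟩ * ({η : V → ℕ | H.Recurrent η}.ncard : ℚ) := by
  have hR : {η : V → ℕ | H.Recurrent η} = H.recurrents := by
    ext η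
    simp
  rw [hR, finsum_mem_coe_finset, Set.ncard_coe_finset, lapInv, ← H.lap_isSymm.inv.apply,
    ← lapInv, lapInv_mul_card]
  refine Finset.sum_congr rfl fun η hη => ?_
  rw [hn η (mem_recurrents.mp hη) _ legalSeq_stabSeq stable_stabilize]
  rfl
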